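/- Let l_0 = l_λ = l_t = ℂ·(0,1), l_1 = ℂ·(1,1), l_∞ = ℂ·(1,0). A rational Higgs field θ = ((α, β), (γ, −α)) is a parabolic Higgs field for these directions if and only if α = 0, β = 0 and γ = (c0 + c1·X)/(X·(X−λ)·(X−t)) for some c0, c1 ∈ ℂ. Equivalently, the set of parabolic Higgs fields for these directions equals the ℂ-linear span of Θ1 and Θ2, where Θ1 is the matrix with α = β = 0 and γ = 1/X − 1/(X−λ), and Θ2 is the matrix with α = β = 0 and γ = 1/X − 1/(X−t); moreover Θ1 and Θ2 are linearly independent over ℂ. -/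

import Mathlib

noncomputable section

open Polynomial

abbrev K : Type := RatFunc ℂ

def Xr : K := RatFunc.X

def Cc (a : ℂ) : K := RatFunc.C a

/-- q = X(X-1)(X-λ)(X-t) -/
def q (lm tm : ℂ) : Polynomial ℂ :=
  Polynomial.X * (Polynomial.X - Polynomial.C 1) * (Polynomial.X - Polynomial.C lm) *
    (Polynomial.X - Polynomial.C tm)

def toK : Polynomial ℂ →+* K := algebraMap (Polynomial ℂ) K

def IsReg (lm tm : ℂ) (r : K) : Prop :=
  ∃ p : Polynomial ℂ, p.degree ≤ 3 ∧ toK (q lm tm) * r = toK p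

def higgsMat (a b c : K) : Matrix (Fin 2) (Fin 2) K := !![a, b; c, -a]

def IsRatHiggs (lm tm : ℂ) (a b c : K) : Prop :=
  IsReg lm tm a ∧ IsReg lm tm b ∧ IsReg lm tm c

def evalAt (p : ℂ) (r : K) : ℂ := RatFunc.eval (RingHom.id ℂ) p r

def resFin (p : ℂ) (M : Matrix (Fin 2) (Fin 2) K) : Matrix (Fin 2) (Fin 2) ℂ :=
  Matrix.of fun i j => evalAt p ((Xr - Cc p) * M i j)

def coeff3 (lm tm : ℂ) (r : K) : ℂ := ((toK (q lm tm) * r).num).coeff 3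

def resInf (lm tm : ℂ) (M : Matrix (Fin 2) (Fin 2) K) : Matrix (Fin 2) (Fin 2) ℂ :=
  -(Matrix.of fun i j => coeff3 lm tm (M i j))

def line (a b : ℂ) : Submodule ℂ (Fin 2 → ℂ) := Submodule.span ℂ {![a, b]}

def NilOn (R : Matrix (Fin 2) (Fin 2) ℂ) (L : Submodule ℂ (Fin 2 → ℂ)) : Prop :=
  (∀ v ∈ L, R.mulVec v = 0) ∧ (∀ v, R.mulVec v ∈ L)

def IsParabolic (lm tm : ℂ) (M : Matrix (Fin 2) (Fin 2) K)
    (l0 l1 ll lt li : Submodule ℂ (Fin 2 → ℂ)) : Prop :=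
  NilOn (resFin 0 M) l0 ∧ NilOn (resFin 1 M) l1 ∧ NilOn (resFin lm M) ll ∧
  NilOn (resFin tm M) lt ∧ NilOn (resInf lm tm M) li

/-- a/(X - p) -/
def frac (a p : ℂ) : K := Cc a / (Xr - Cc p)

def α1 (lm u : ℂ) : K := frac u lm - frac u 1
def β1 (lm u : ℂ) : K := frac u 1 - frac 1 lm + frac (1 - u) 0
def γ1 (lm u : ℂ) : K := frac (u ^ 2) lm - frac u 1
def θ1 (lm u : ℂ) : Matrix (Fin 2) (Fin 2) K := higgsMat (α1 lm u) (β1 lm u) (γ1 lm u)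

def α2 (tm v : ℂ) : K := frac v tm - frac v 1
def β2 (tm v : ℂ) : K := frac v 1 - frac 1 tm + frac (1 - v) 0
def γ2 (tm v : ℂ) : K := frac (v ^ 2) tm - frac v 1
def θ2 (tm v : ℂ) : Matrix (Fin 2) (Fin 2) K := higgsMat (α2 tm v) (β2 tm v) (γ2 tm v)

/-- Θ1 : zero diagonal, zero upper-right entry, lower-left entry 1/X − 1/(X−λ). -/
def Θ1 (lm : ℂ) : Matrix (Fin 2) (Fin 2) K := higgsMat 0 0 (Xr⁻¹ - (Xr - Cc lm)⁻¹)

/-- Θ2 : zero diagonal, zero upper-right entry, lower-left entry 1/X − 1/(X−t). -/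
def Θ2 (tm : ℂ) : Matrix (Fin 2) (Fin 2) K := higgsMat 0 0 (Xr⁻¹ - (Xr - Cc tm)⁻¹)

section Helpers

lemma toK_inj : Function.Injective toK := RatFunc.algebraMap_injective ℂ

lemma toK_ne_zero {p : Polynomial ℂ} (hp : p ≠ 0) : toK p ≠ 0 :=
  RatFunc.algebraMap_ne_zero hp

lemma toK_X : toK Polynomial.X = Xr := RatFunc.algebraMap_X

lemma toK_C (a : ℂ) : toK (Polynomial.C a) = Cc a := RatFunc.algebraMap_C a

lemma toK_X_sub_C (a : ℂ) : toK (Polynomial.X - Polynomial.C a) = Xr - Cc a := by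
  rw [map_sub, toK_X, toK_C]

lemma evalAt_div (p r : Polynomial ℂ) (s : ℂ) (hr : r.eval s ≠ 0) :
    evalAt s (toK p / toK r) = p.eval s / r.eval s := by
  have hr0 : r ≠ 0 := fun h => hr (by simp [h])
  set f : K := toK p / toK r with hf
  have hdvd : f.denom ∣ r := (RatFunc.denom_dvd hr0).2 ⟨p, rfl⟩
  have hds : (f.denom).eval s ≠ 0 := by
    obtain ⟨u, hu⟩ := hdvd
    intro h
    exact hr (by rw [hu]; simp [h])
  have hfd : f.denom ≠ 0 := RatFunc.denom_ne_zero f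
  have hcross : f.num * r = p * f.denom := by
    apply toK_inj
    have h1 : toK f.num / toK f.denom = toK p / toK r := RatFunc.num_div_denom f
    have := (div_eq_div_iff (toK_ne_zero hfd) (toK_ne_zero hr0)).1 h1
    rw [map_mul, map_mul]
    exact this
  have hevals : f.num.eval s * r.eval s = p.eval s * f.denom.eval s := by
    have := congrArg (Polynomial.eval s) hcross
    simpa using this
  have : evalAt s f = f.num.eval s / f.denom.eval s := by
    simp only [evalAt, RatFunc.eval, Polynomial.eval₂_id]
  rw [this, div_eq_div_iff hds hr]
  exact hevals

/-- Residue computation: if `((X - s) * g) * r = p` with `g(s) ≠ 0`, then the residue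
of `r` at `s` is `p(s)/g(s)`. -/
lemma evalAt_res (g p : Polynomial ℂ) (s : ℂ) (hg : g.eval s ≠ 0) (r : K)
    (h : toK ((Polynomial.X - Polynomial.C s) * g) * r = toK p) :
    evalAt s ((Xr - Cc s) * r) = p.eval s / g.eval s := by
  have hg0 : g ≠ 0 := fun hh => hg (by simp [hh])
  have key : (Xr - Cc s) * r = toK p / toK g := by
    rw [eq_div_iff (toK_ne_zero hg0)]
    rw [map_mul, toK_X_sub_C] at h
    rw [← h]; ring
  rw [key]
  exact evalAt_div p g s hg

lemma coeff3_eq (lm tm : ℂ) (r : K) (p : Polynomial ℂ) (h : toK (q lm tm) * r = toK p) :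
    coeff3 lm tm r = p.coeff 3 := by
  unfold coeff3
  rw [h]
  rw [show toK p = algebraMap (Polynomial ℂ) K p from rfl, RatFunc.num_algebraMap]

end Helpers
section Nil

lemma vec_decomp (v : Fin 2 → ℂ) : v = v 0 • ![(1:ℂ),0] + v 1 • ![(0:ℂ),1] := by
  funext i; fin_cases i <;> simp

lemma mulVec_at (R : Matrix (Fin 2) (Fin 2) ℂ) (x y : ℂ) (i : Fin 2) :
    R.mulVec ![x, y] i = R i 0 * x + R i 1 * y := by
  simp [Matrix.mulVec, dotProduct, Fin.sum_univ_two, Matrix.vecHead, Matrix.vecTail]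

lemma nilOn_span_iff (R : Matrix (Fin 2) (Fin 2) ℂ) (w : Fin 2 → ℂ) :
    NilOn R (Submodule.span ℂ {w}) ↔
      R.mulVec w = 0 ∧ R.mulVec ![1,0] ∈ Submodule.span ℂ {w} ∧
        R.mulVec ![0,1] ∈ Submodule.span ℂ {w} := by
  constructor
  · rintro ⟨h1, h2⟩
    exact ⟨h1 w (Submodule.mem_span_singleton_self w), h2 _, h2 _⟩
  · rintro ⟨h1, h2, h3⟩
    constructor
    · intro v hv
      obtain ⟨s, rfl⟩ := Submodule.mem_span_singleton.1 hv
      rw [Matrix.mulVec_smul, h1, smul_zero]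
    · intro v
      rw [vec_decomp v, Matrix.mulVec_add, Matrix.mulVec_smul, Matrix.mulVec_smul]
      exact Submodule.add_mem _ (Submodule.smul_mem _ _ h2) (Submodule.smul_mem _ _ h3)

lemma mem_line_iff (a b : ℂ) (v : Fin 2 → ℂ) :
    v ∈ line a b ↔ ∃ s : ℂ, v 0 = s * a ∧ v 1 = s * b := by
  rw [line, Submodule.mem_span_singleton]
  constructor
  · rintro ⟨s, rfl⟩
    exact ⟨s, by simp, by simp⟩
  · rintro ⟨s, h0, h1⟩
    refine ⟨s, ?_⟩
    funext i; fin_cases i <;> simp [h0, h1]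

lemma nilOn01_iff (R : Matrix (Fin 2) (Fin 2) ℂ) :
    NilOn R (line 0 1) ↔ R 0 0 = 0 ∧ R 0 1 = 0 ∧ R 1 1 = 0 := by
  rw [show line 0 1 = Submodule.span ℂ {![(0:ℂ),1]} from rfl, nilOn_span_iff]
  rw [show Submodule.span ℂ {![(0:ℂ),1]} = line 0 1 from rfl]
  constructor
  · rintro ⟨h1, h2, h3⟩
    have e0 := congrFun h1 0
    have e1 := congrFun h1 1
    rw [mulVec_at] at e0 e1
    simp at e0 e1
    obtain ⟨s, hs0, hs1⟩ := (mem_line_iff 0 1 _).1 h2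
    rw [mulVec_at] at hs0
    simp [e0] at hs0
    exact ⟨hs0, e0, e1⟩
  · rintro ⟨h00, h01, h11⟩
    refine ⟨?_, ?_, ?_⟩
    · funext i; fin_cases i <;> simp [mulVec_at, h00, h01, h11]
    · rw [mem_line_iff]
      exact ⟨R 1 0, by simp [mulVec_at, h00], by simp [mulVec_at]⟩
    · rw [mem_line_iff]
      exact ⟨0, by simp [mulVec_at, h01], by simp [mulVec_at, h11]⟩

lemma nilOn10_iff (R : Matrix (Fin 2) (Fin 2) ℂ) :
    NilOn R (line 1 0) ↔ R 0 0 = 0 ∧ R 1 0 = 0 ∧ R 1 1 = 0 := by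
  rw [show line 1 0 = Submodule.span ℂ {![(1:ℂ),0]} from rfl, nilOn_span_iff]
  rw [show Submodule.span ℂ {![(1:ℂ),0]} = line 1 0 from rfl]
  constructor
  · rintro ⟨h1, h2, h3⟩
    have e0 := congrFun h1 0
    have e1 := congrFun h1 1
    rw [mulVec_at] at e0 e1
    simp at e0 e1
    obtain ⟨s, hs0, hs1⟩ := (mem_line_iff 1 0 _).1 h3
    rw [mulVec_at] at hs1
    simp [e1] at hs1
    exact ⟨e0, e1, hs1⟩
  · rintro ⟨h00, h10, h11⟩
    refine ⟨?_, ?_, ?_⟩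
    · funext i; fin_cases i <;> simp [mulVec_at, h00, h10, h11]
    · rw [mem_line_iff]
      exact ⟨R 0 0, by simp [mulVec_at], by simp [mulVec_at, h10]⟩
    · rw [mem_line_iff]
      exact ⟨R 0 1, by simp [mulVec_at], by simp [mulVec_at, h11]⟩

lemma nilOn11_iff (R : Matrix (Fin 2) (Fin 2) ℂ) :
    NilOn R (line 1 1) ↔ R 0 1 = -R 0 0 ∧ R 1 0 = R 0 0 ∧ R 1 1 = -R 0 0 := by
  rw [show line 1 1 = Submodule.span ℂ {![(1:ℂ),1]} from rfl, nilOn_span_iff]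
  rw [show Submodule.span ℂ {![(1:ℂ),1]} = line 1 1 from rfl]
  constructor
  · rintro ⟨h1, h2, h3⟩
    have e0 := congrFun h1 0
    have e1 := congrFun h1 1
    rw [mulVec_at] at e0 e1
    simp at e0 e1
    obtain ⟨s, hs0, hs1⟩ := (mem_line_iff 1 1 _).1 h2
    rw [mulVec_at] at hs0 hs1
    simp at hs0 hs1
    have h10 : R 1 0 = R 0 0 := by rw [hs1, ← hs0]
    refine ⟨by linear_combination e0, h10, ?_⟩
    have := e1
    rw [h10] at this
    linear_combination this
  · rintro ⟨h01, h10, h11⟩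
    refine ⟨?_, ?_, ?_⟩
    · funext i; fin_cases i <;> simp [mulVec_at, h01, h10, h11]
    · rw [mem_line_iff]
      exact ⟨R 0 0, by simp [mulVec_at], by simp [mulVec_at, h10]⟩
    · rw [mem_line_iff]
      exact ⟨R 0 1, by simp [mulVec_at], by simp [mulVec_at, h11, h01]⟩

end Nil
section Poly

lemma natDegree_lt3 (p : Polynomial ℂ) (hp : p ≠ 0) (hdeg : p.degree ≤ 3)
    (h3 : p.coeff 3 = 0) : p.natDegree < 3 := by
  have hle : p.natDegree ≤ 3 := Polynomial.natDegree_le_iff_degree_le.2 hdeg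
  have hne : p.natDegree ≠ 3 := by
    intro h
    have hl : p.leadingCoeff ≠ 0 := Polynomial.leadingCoeff_ne_zero.2 hp
    rw [Polynomial.leadingCoeff, h] at hl
    exact hl h3
  omega

lemma poly_zero3 (p : Polynomial ℂ) (hdeg : p.degree ≤ 3) (h3 : p.coeff 3 = 0)
    {r0 r1 r2 : ℂ} (h01 : r0 ≠ r1) (h02 : r0 ≠ r2) (h12 : r1 ≠ r2)
    (e0 : p.eval r0 = 0) (e1 : p.eval r1 = 0) (e2 : p.eval r2 = 0) : p = 0 := by
  by_cases hp : p = 0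
  · exact hp
  refine Polynomial.eq_zero_of_natDegree_lt_card_of_eval_eq_zero p
    (f := ![r0, r1, r2]) ?_ ?_ ?_
  · intro i j hij
    fin_cases i <;> fin_cases j <;> simp_all
  · intro i; fin_cases i <;> simpa
  · simpa using natDegree_lt3 p hp hdeg h3

lemma poly_zero4 (p : Polynomial ℂ) (hdeg : p.degree ≤ 3)
    {r0 r1 r2 r3 : ℂ} (h01 : r0 ≠ r1) (h02 : r0 ≠ r2) (h03 : r0 ≠ r3)
    (h12 : r1 ≠ r2) (h13 : r1 ≠ r3) (h23 : r2 ≠ r3)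
    (e0 : p.eval r0 = 0) (e1 : p.eval r1 = 0) (e2 : p.eval r2 = 0)
    (e3 : p.eval r3 = 0) : p = 0 := by
  refine Polynomial.eq_zero_of_natDegree_lt_card_of_eval_eq_zero p
    (f := ![r0, r1, r2, r3]) ?_ ?_ ?_
  · intro i j hij
    fin_cases i <;> fin_cases j <;> simp_all
  · intro i; fin_cases i <;> simpa
  · have : p.natDegree ≤ 3 := Polynomial.natDegree_le_iff_degree_le.2 hdeg
    simpa using Nat.lt_succ_of_le this

/-- decomposition of the `c`-numerator -/
lemma poly_decomp (p : Polynomial ℂ) (hdeg : p.degree ≤ 3) (h3 : p.coeff 3 = 0)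
    (h1 : p.eval 1 = 0) :
    ∃ c0 c1 : ℂ, p = (Polynomial.X - Polynomial.C 1) *
      (Polynomial.C c0 + Polynomial.C c1 * Polynomial.X) := by
  have hdvd : (Polynomial.X - Polynomial.C 1) ∣ p := by
    rw [Polynomial.dvd_iff_isRoot]
    exact h1
  obtain ⟨s, hs⟩ := hdvd
  by_cases hsz : s = 0
  · exact ⟨0, 0, by simp [hs, hsz]⟩
  have hdeg2 : p.degree ≤ 2 := by
    rw [Polynomial.degree_le_iff_coeff_zero]
    intro m hm
    have hm2 : 2 < (m : WithBot ℕ) := hm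
    have hm' : 2 < m := by exact_mod_cast hm2
    rcases eq_or_lt_of_le (show 3 ≤ m by omega) with h | h
    · rw [← h]; exact h3
    · refine Polynomial.coeff_eq_zero_of_degree_lt (lt_of_le_of_lt hdeg ?_)
      exact_mod_cast h
  have hdegs : s.degree ≤ 1 := by
    have hmul : p.degree = 1 + s.degree := by
      rw [hs, Polynomial.degree_mul, Polynomial.degree_X_sub_C]
    rw [hmul] at hdeg2
    rw [Polynomial.degree_eq_natDegree hsz] at hdeg2 ⊢
    have : 1 + (s.natDegree : WithBot ℕ) ≤ 2 := hdeg2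
    have h1' : (1:WithBot ℕ) + (s.natDegree : WithBot ℕ) = ((1 + s.natDegree : ℕ) : WithBot ℕ) := by
      push_cast; ring
    rw [h1'] at this
    have h2' : 1 + s.natDegree ≤ 2 := by exact_mod_cast this
    have h2 : s.natDegree ≤ 1 := by omega
    exact_mod_cast h2
  refine ⟨s.coeff 0, s.coeff 1, ?_⟩
  rw [hs]
  congr 1
  conv_lhs => rw [Polynomial.eq_X_add_C_of_degree_le_one hdegs]
  ring

end Poly
section Kfacts

/-- the standard lower-left entry -/
def std (lm tm c0 c1 : ℂ) : K :=
  (Cc c0 + Cc c1 * Xr) / (Xr * (Xr - Cc lm) * (Xr - Cc tm))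

/-- its numerator as a polynomial -/
def nump (c0 c1 : ℂ) : Polynomial ℂ :=
  (Polynomial.X - Polynomial.C 1) * (Polynomial.C c0 + Polynomial.C c1 * Polynomial.X)

/-- the cubic denominator -/
def denp (lm tm : ℂ) : Polynomial ℂ :=
  Polynomial.X * (Polynomial.X - Polynomial.C lm) * (Polynomial.X - Polynomial.C tm)

lemma denp_ne (lm tm : ℂ) : denp lm tm ≠ 0 :=
  mul_ne_zero (mul_ne_zero Polynomial.X_ne_zero (Polynomial.X_sub_C_ne_zero lm))
    (Polynomial.X_sub_C_ne_zero tm)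

lemma q_ne (lm tm : ℂ) : q lm tm ≠ 0 :=
  mul_ne_zero (mul_ne_zero (mul_ne_zero Polynomial.X_ne_zero (Polynomial.X_sub_C_ne_zero 1))
    (Polynomial.X_sub_C_ne_zero lm)) (Polynomial.X_sub_C_ne_zero tm)

lemma std_eq (lm tm c0 c1 : ℂ) :
    std lm tm c0 c1 = toK (Polynomial.C c0 + Polynomial.C c1 * Polynomial.X) / toK (denp lm tm) := by
  rw [std, denp, map_mul, map_mul, map_add, map_mul, toK_X, toK_C, toK_C, toK_X_sub_C, toK_X_sub_C]

lemma q_mul_std (lm tm c0 c1 : ℂ) :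
    toK (q lm tm) * std lm tm c0 c1 = toK (nump c0 c1) := by
  rw [std_eq, mul_div_assoc', div_eq_iff (toK_ne_zero (denp_ne lm tm)), ← map_mul, ← map_mul]
  congr 1
  rw [q, nump, denp]
  ring

lemma nump_deg (c0 c1 : ℂ) : (nump c0 c1).degree ≤ 2 := by
  rw [nump]
  refine le_trans (Polynomial.degree_mul_le _ _) ?_
  have h1 : (Polynomial.X - Polynomial.C (1:ℂ)).degree ≤ 1 :=
    le_of_eq (Polynomial.degree_X_sub_C 1)
  have h2 : (Polynomial.C c0 + Polynomial.C c1 * Polynomial.X).degree ≤ 1 := by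
    rw [add_comm]
    exact Polynomial.degree_linear_le
  calc (Polynomial.X - Polynomial.C (1:ℂ)).degree +
      (Polynomial.C c0 + Polynomial.C c1 * Polynomial.X).degree
      ≤ (1 : WithBot ℕ) + (1 : WithBot ℕ) := add_le_add h1 h2
    _ = 2 := by rfl

lemma nump_deg3 (c0 c1 : ℂ) : (nump c0 c1).degree ≤ 3 :=
  le_trans (nump_deg c0 c1) (by norm_num)

lemma nump_coeff3 (c0 c1 : ℂ) : (nump c0 c1).coeff 3 = 0 :=
  Polynomial.coeff_eq_zero_of_degree_lt (lt_of_le_of_lt (nump_deg c0 c1) (by norm_num))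

lemma nump_eval1 (c0 c1 : ℂ) : (nump c0 c1).eval 1 = 0 := by simp [nump]

lemma res_entry_zero {g p : Polynomial ℂ} {s : ℂ} (hg : g.eval s ≠ 0) {r : K}
    (h : toK ((Polynomial.X - Polynomial.C s) * g) * r = toK p)
    (hz : evalAt s ((Xr - Cc s) * r) = 0) : p.eval s = 0 := by
  rw [evalAt_res g p s hg r h] at hz
  exact (div_eq_zero_iff.1 hz).resolve_right hg

lemma higgs00 (a b c : K) : higgsMat a b c 0 0 = a := rfl
lemma higgs01 (a b c : K) : higgsMat a b c 0 1 = b := rfl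
lemma higgs10 (a b c : K) : higgsMat a b c 1 0 = c := rfl
lemma higgs11 (a b c : K) : higgsMat a b c 1 1 = -a := rfl

lemma resFin_entry (p : ℂ) (M : Matrix (Fin 2) (Fin 2) K) (i j : Fin 2) :
    resFin p M i j = evalAt p ((Xr - Cc p) * M i j) := rfl

lemma resInf_entry (lm tm : ℂ) (M : Matrix (Fin 2) (Fin 2) K) (i j : Fin 2) :
    resInf lm tm M i j = -(coeff3 lm tm (M i j)) := rfl

-- factorizations of q at the four finite points
lemma q_fact0 (lm tm : ℂ) : q lm tm = (Polynomial.X - Polynomial.C 0) *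
    ((Polynomial.X - Polynomial.C 1) * (Polynomial.X - Polynomial.C lm) *
      (Polynomial.X - Polynomial.C tm)) := by
  rw [q, Polynomial.C_0, sub_zero]; ring

lemma q_fact1 (lm tm : ℂ) : q lm tm = (Polynomial.X - Polynomial.C 1) *
    (Polynomial.X * (Polynomial.X - Polynomial.C lm) * (Polynomial.X - Polynomial.C tm)) := by
  rw [q]; ring

lemma q_factl (lm tm : ℂ) : q lm tm = (Polynomial.X - Polynomial.C lm) *
    (Polynomial.X * (Polynomial.X - Polynomial.C 1) * (Polynomial.X - Polynomial.C tm)) := by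
  rw [q]; ring

lemma q_factt (lm tm : ℂ) : q lm tm = (Polynomial.X - Polynomial.C tm) *
    (Polynomial.X * (Polynomial.X - Polynomial.C 1) * (Polynomial.X - Polynomial.C lm)) := by
  rw [q]; ring

end Kfacts
section Main

lemma forward (lm tm : ℂ) (hl0 : lm ≠ 0) (hl1 : lm ≠ 1) (ht0 : tm ≠ 0) (ht1 : tm ≠ 1)
    (hlt : lm ≠ tm) (a b c : K) (hh : IsRatHiggs lm tm a b c)
    (hp : IsParabolic lm tm (higgsMat a b c) (line 0 1) (line 1 1) (line 0 1) (line 0 1)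
      (line 1 0)) :
    a = 0 ∧ b = 0 ∧ ∃ c0 c1 : ℂ, c = std lm tm c0 c1 := by
  obtain ⟨⟨pa, hpa_deg, hpa⟩, ⟨pb, hpb_deg, hpb⟩, ⟨pc, hpc_deg, hpc⟩⟩ := hh
  obtain ⟨h0, h1, hl, ht, hinf⟩ := hp
  rw [nilOn01_iff] at h0 hl ht
  rw [nilOn11_iff] at h1
  rw [nilOn10_iff] at hinf
  simp only [resFin_entry, resInf_entry, higgs00, higgs01, higgs10, higgs11] at h0 h1 hl ht hinf
  have hg0 : (((Polynomial.X - Polynomial.C 1) * (Polynomial.X - Polynomial.C lm) *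
      (Polynomial.X - Polynomial.C tm)) : Polynomial ℂ).eval 0 ≠ 0 := by
    simp only [Polynomial.eval_mul, Polynomial.eval_sub, Polynomial.eval_X, Polynomial.eval_C,
      zero_sub]
    exact mul_ne_zero (mul_ne_zero (neg_ne_zero.2 one_ne_zero) (neg_ne_zero.2 hl0))
      (neg_ne_zero.2 ht0)
  have hg1 : ((Polynomial.X * (Polynomial.X - Polynomial.C lm) *
      (Polynomial.X - Polynomial.C tm)) : Polynomial ℂ).eval 1 ≠ 0 := by
    simp only [Polynomial.eval_mul, Polynomial.eval_sub, Polynomial.eval_X, Polynomial.eval_C]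
    exact mul_ne_zero (mul_ne_zero one_ne_zero (sub_ne_zero.2 (Ne.symm hl1)))
      (sub_ne_zero.2 (Ne.symm ht1))
  have hgl : ((Polynomial.X * (Polynomial.X - Polynomial.C 1) *
      (Polynomial.X - Polynomial.C tm)) : Polynomial ℂ).eval lm ≠ 0 := by
    simp only [Polynomial.eval_mul, Polynomial.eval_sub, Polynomial.eval_X, Polynomial.eval_C]
    exact mul_ne_zero (mul_ne_zero hl0 (sub_ne_zero.2 hl1)) (sub_ne_zero.2 hlt)
  have hgt : ((Polynomial.X * (Polynomial.X - Polynomial.C 1) *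
      (Polynomial.X - Polynomial.C lm)) : Polynomial ℂ).eval tm ≠ 0 := by
    simp only [Polynomial.eval_mul, Polynomial.eval_sub, Polynomial.eval_X, Polynomial.eval_C]
    exact mul_ne_zero (mul_ne_zero ht0 (sub_ne_zero.2 ht1)) (sub_ne_zero.2 (Ne.symm hlt))
  -- a vanishes
  have ea0 : pa.eval 0 = 0 := res_entry_zero hg0 (by rw [← q_fact0]; exact hpa) h0.1
  have eal : pa.eval lm = 0 := res_entry_zero hgl (by rw [← q_factl]; exact hpa) hl.1
  have eat : pa.eval tm = 0 := res_entry_zero hgt (by rw [← q_factt]; exact hpa) ht.1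
  have ca3 : pa.coeff 3 = 0 := by
    have := hinf.1
    rw [coeff3_eq lm tm a pa hpa, neg_eq_zero] at this
    exact this
  have hpa0 : pa = 0 :=
    poly_zero3 pa hpa_deg ca3 (Ne.symm hl0) (Ne.symm ht0) hlt ea0 eal eat
  have ha : a = 0 := by
    have h : toK (q lm tm) * a = 0 := by rw [hpa, hpa0, map_zero]
    exact (mul_eq_zero.1 h).resolve_left (toK_ne_zero (q_ne lm tm))
  have hA1 : evalAt 1 ((Xr - Cc 1) * a) = 0 := by
    rw [ha, mul_zero]
    simp [evalAt]
  -- b vanishes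
  have eb0 : pb.eval 0 = 0 := res_entry_zero hg0 (by rw [← q_fact0]; exact hpb) h0.2.1
  have ebl : pb.eval lm = 0 := res_entry_zero hgl (by rw [← q_factl]; exact hpb) hl.2.1
  have ebt : pb.eval tm = 0 := res_entry_zero hgt (by rw [← q_factt]; exact hpb) ht.2.1
  have eb1 : pb.eval 1 = 0 := by
    have hb1 := h1.1
    rw [hA1, neg_zero] at hb1
    exact res_entry_zero hg1 (by rw [← q_fact1]; exact hpb) hb1
  have hpb0 : pb = 0 := by
    refine poly_zero4 pb hpb_deg (r0 := 0) (r1 := 1) (r2 := lm) (r3 := tm) (by norm_num)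
      (Ne.symm hl0) (Ne.symm ht0) (Ne.symm hl1) (Ne.symm ht1) hlt eb0 eb1 ebl ebt
  have hb : b = 0 := by
    have h : toK (q lm tm) * b = 0 := by rw [hpb, hpb0, map_zero]
    exact (mul_eq_zero.1 h).resolve_left (toK_ne_zero (q_ne lm tm))
  -- c has the standard form
  have ec1 : pc.eval 1 = 0 := by
    have hc1 := h1.2.1
    rw [hA1] at hc1
    exact res_entry_zero hg1 (by rw [← q_fact1]; exact hpc) hc1
  have cc3 : pc.coeff 3 = 0 := by
    have := hinf.2.1
    rw [coeff3_eq lm tm c pc hpc, neg_eq_zero] at this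
    exact this
  obtain ⟨c0, c1, hdec⟩ := poly_decomp pc hpc_deg cc3 ec1
  refine ⟨ha, hb, c0, c1, ?_⟩
  have key : toK (q lm tm) * c = toK (q lm tm) * std lm tm c0 c1 := by
    rw [hpc, q_mul_std]
    exact congrArg toK hdec
  exact mul_left_cancel₀ (toK_ne_zero (q_ne lm tm)) key

lemma backward (lm tm : ℂ) (hl1 : lm ≠ 1) (ht1 : tm ≠ 1) (c0 c1 : ℂ) :
    IsRatHiggs lm tm 0 0 (std lm tm c0 c1) ∧
    IsParabolic lm tm (higgsMat 0 0 (std lm tm c0 c1)) (line 0 1) (line 1 1) (line 0 1)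
      (line 0 1) (line 1 0) := by
  have hg1 : ((Polynomial.X * (Polynomial.X - Polynomial.C lm) *
      (Polynomial.X - Polynomial.C tm)) : Polynomial ℂ).eval 1 ≠ 0 := by
    simp only [Polynomial.eval_mul, Polynomial.eval_sub, Polynomial.eval_X, Polynomial.eval_C]
    exact mul_ne_zero (mul_ne_zero one_ne_zero (sub_ne_zero.2 (Ne.symm hl1)))
      (sub_ne_zero.2 (Ne.symm ht1))
  have hreg0 : IsReg lm tm 0 := ⟨0, by simp, by simp⟩
  have hregc : IsReg lm tm (std lm tm c0 c1) :=
    ⟨nump c0 c1, nump_deg3 c0 c1, q_mul_std lm tm c0 c1⟩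
  have hz : ∀ s : ℂ, evalAt s ((Xr - Cc s) * (0 : K)) = 0 := fun s => by
    rw [mul_zero]; simp [evalAt]
  have hc1 : evalAt 1 ((Xr - Cc 1) * std lm tm c0 c1) = 0 := by
    rw [evalAt_res _ (nump c0 c1) 1 hg1 _ (by rw [← q_fact1]; exact q_mul_std lm tm c0 c1),
      nump_eval1, zero_div]
  have hcoef0 : coeff3 lm tm (0 : K) = 0 := by
    rw [coeff3_eq lm tm 0 0 (by rw [mul_zero, map_zero])]
    simp
  have hcoefc : coeff3 lm tm (std lm tm c0 c1) = 0 := by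
    rw [coeff3_eq lm tm _ _ (q_mul_std lm tm c0 c1)]
    exact nump_coeff3 c0 c1
  refine ⟨⟨hreg0, hreg0, hregc⟩, ?_, ?_, ?_, ?_, ?_⟩
  · rw [nilOn01_iff]
    exact ⟨by simp only [resFin_entry, higgs00]; exact hz 0,
      by simp only [resFin_entry, higgs01]; exact hz 0,
      by simp only [resFin_entry, higgs11, neg_zero]; exact hz 0⟩
  · rw [nilOn11_iff]
    refine ⟨?_, ?_, ?_⟩ <;>
      simp only [resFin_entry, higgs00, higgs01, higgs10, higgs11, neg_zero] <;>
      rw [hz 1] <;> simp [hc1, hz 1]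
  · rw [nilOn01_iff]
    exact ⟨by simp only [resFin_entry, higgs00]; exact hz lm,
      by simp only [resFin_entry, higgs01]; exact hz lm,
      by simp only [resFin_entry, higgs11, neg_zero]; exact hz lm⟩
  · rw [nilOn01_iff]
    exact ⟨by simp only [resFin_entry, higgs00]; exact hz tm,
      by simp only [resFin_entry, higgs01]; exact hz tm,
      by simp only [resFin_entry, higgs11, neg_zero]; exact hz tm⟩
  · rw [nilOn10_iff]
    exact ⟨by simp only [resInf_entry, higgs00]; rw [hcoef0, neg_zero],
      by simp only [resInf_entry, higgs10]; rw [hcoefc, neg_zero],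
      by simp only [resInf_entry, higgs11, neg_zero]; rw [hcoef0, neg_zero]⟩

end Main
section Span

lemma Xr_ne : Xr ≠ 0 := by
  rw [← toK_X]; exact toK_ne_zero Polynomial.X_ne_zero

lemma Xr_sub_ne (a : ℂ) : Xr - Cc a ≠ 0 := by
  rw [← toK_X_sub_C]; exact toK_ne_zero (Polynomial.X_sub_C_ne_zero a)

lemma smul_K (s : ℂ) (g : K) : s • g = Cc s * g := RatFunc.smul_eq_C_mul s g

lemma span_entry (lm tm : ℂ) (s t : ℂ) :
    Cc s * (Xr⁻¹ - (Xr - Cc lm)⁻¹) + Cc t * (Xr⁻¹ - (Xr - Cc tm)⁻¹)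
      = std lm tm ((s + t) * (lm * tm)) (-(s * lm + t * tm)) := by
  have hd : Xr * (Xr - Cc lm) * (Xr - Cc tm) ≠ 0 :=
    mul_ne_zero (mul_ne_zero Xr_ne (Xr_sub_ne lm)) (Xr_sub_ne tm)
  have h0 := Xr_ne
  have h1 : Xr - RatFunc.C lm ≠ 0 := Xr_sub_ne lm
  have h2 : Xr - RatFunc.C tm ≠ 0 := Xr_sub_ne tm
  rw [std, eq_div_iff hd]
  simp only [Cc, map_mul, map_add, map_neg]
  field_simp
  ring

lemma smul_comb (s t : ℂ) (g h : K) :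
    s • higgsMat 0 0 g + t • higgsMat 0 0 h = higgsMat 0 0 (Cc s * g + Cc t * h) := by
  ext i j
  fin_cases i <;> fin_cases j <;>
    simp [higgsMat, Matrix.smul_apply, Matrix.add_apply, smul_K]

lemma std_inj (lm tm : ℂ) {c0 c1 d0 d1 : ℂ} (h : std lm tm c0 c1 = std lm tm d0 d1) :
    c0 = d0 ∧ c1 = d1 := by
  rw [std_eq, std_eq,
    div_eq_div_iff (toK_ne_zero (denp_ne lm tm)) (toK_ne_zero (denp_ne lm tm))] at h
  have h1 : toK (Polynomial.C c0 + Polynomial.C c1 * Polynomial.X) =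
      toK (Polynomial.C d0 + Polynomial.C d1 * Polynomial.X) :=
    mul_right_cancel₀ (toK_ne_zero (denp_ne lm tm)) h
  have h2 := toK_inj h1
  constructor
  · have := congrArg (fun p => Polynomial.coeff p 0) h2
    simpa using this
  · have := congrArg (fun p => Polynomial.coeff p 1) h2
    simpa using this

end Span
/-- for l₀ = l_λ = l_t = ℂ(0,1), l₁ = ℂ(1,1), l_∞ = ℂ(1,0), the parabolic
Higgs fields are exactly the matrices with α = β = 0 and γ = (c0 + c1·X)/(X(X−λ)(X−t)),
i.e. the ℂ-span of Θ1 and Θ2, which are linearly independent. -/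
theorem stmt15 (lm tm : ℂ) (hl0 : lm ≠ 0) (hl1 : lm ≠ 1) (ht0 : tm ≠ 0) (ht1 : tm ≠ 1)
    (hlt : lm ≠ tm) :
    (∀ a b c : K, IsRatHiggs lm tm a b c →
      (IsParabolic lm tm (higgsMat a b c) (line 0 1) (line 1 1) (line 0 1) (line 0 1)
          (line 1 0) ↔
        (a = 0 ∧ b = 0 ∧
          ∃ c0 c1 : ℂ, c = (Cc c0 + Cc c1 * Xr) / (Xr * (Xr - Cc lm) * (Xr - Cc tm))))) ∧
    ({M | (∃ a b c : K, M = higgsMat a b c ∧ IsRatHiggs lm tm a b c) ∧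
        IsParabolic lm tm M (line 0 1) (line 1 1) (line 0 1) (line 0 1) (line 1 0)} =
      (Submodule.span ℂ {Θ1 lm, Θ2 tm} : Set (Matrix (Fin 2) (Fin 2) K))) ∧
    LinearIndependent ℂ ![Θ1 lm, Θ2 tm] := by
  have hlmtm : lm * tm ≠ 0 := mul_ne_zero hl0 ht0
  have htl : tm - lm ≠ 0 := sub_ne_zero.2 (Ne.symm hlt)
  have part1 : ∀ a b c : K, IsRatHiggs lm tm a b c →
      (IsParabolic lm tm (higgsMat a b c) (line 0 1) (line 1 1) (line 0 1) (line 0 1)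
          (line 1 0) ↔
        (a = 0 ∧ b = 0 ∧
          ∃ c0 c1 : ℂ, c = (Cc c0 + Cc c1 * Xr) / (Xr * (Xr - Cc lm) * (Xr - Cc tm)))) := by
    intro a b c hh
    constructor
    · intro hp
      exact forward lm tm hl0 hl1 ht0 ht1 hlt a b c hh hp
    · rintro ⟨rfl, rfl, c0, c1, rfl⟩
      exact (backward lm tm hl1 ht1 c0 c1).2
  refine ⟨part1, ?_, ?_⟩
  · ext M
    simp only [Set.mem_setOf_eq, SetLike.mem_coe]
    rw [Submodule.mem_span_pair]
    constructor
    · rintro ⟨⟨a, b, c, rfl, hh⟩, hp⟩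
      obtain ⟨rfl, rfl, c0, c1, rfl⟩ := (part1 a b c hh).1 hp
      refine ⟨(c0 / lm + c1) / (tm - lm), c0 / (lm * tm) - (c0 / lm + c1) / (tm - lm), ?_⟩
      set s := (c0 / lm + c1) / (tm - lm) with hs
      set t := c0 / (lm * tm) - s with ht
      have e0 : (s + t) * (lm * tm) = c0 := by
        rw [ht]
        field_simp
        ring
      have e1 : -(s * lm + t * tm) = c1 := by
        rw [ht, hs]
        field_simp
        ring
      rw [Θ1, Θ2, smul_comb, span_entry, e0, e1]
      rfl
    · rintro ⟨s, t, rfl⟩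
      rw [Θ1, Θ2, smul_comb, span_entry]
      exact ⟨⟨0, 0, std lm tm _ _, rfl, (backward lm tm hl1 ht1 _ _).1⟩,
        (backward lm tm hl1 ht1 _ _).2⟩
  · rw [linearIndependent_fin2]
    constructor
    · simp only [Matrix.cons_val_one, Matrix.head_cons]
      intro h
      have h10 := congrFun (congrFun h 1) 0
      rw [Matrix.cons_val_zero, Θ2, higgs10, Matrix.zero_apply] at h10
      have hXX : Xr = Xr - Cc tm := inv_injective (sub_eq_zero.1 h10)
      have htm : Cc tm = 0 := by
        have := hXX.symm
        rw [sub_eq_self] at this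
        exact this
      apply ht0
      rw [← toK_C] at htm
      have := toK_inj (htm.trans (map_zero toK).symm)
      exact Polynomial.C_eq_zero.1 this
    · simp only [Matrix.cons_val_one, Matrix.head_cons, Matrix.cons_val_zero]
      intro aa h
      have h10 := congrFun (congrFun h 1) 0
      have h10' : Cc aa * (Xr⁻¹ - (Xr - Cc tm)⁻¹) = Xr⁻¹ - (Xr - Cc lm)⁻¹ := by
        simpa [Θ1, Θ2, higgs10, Matrix.smul_apply, smul_K, Cc] using h10
      have hL : Cc aa * (Xr⁻¹ - (Xr - Cc tm)⁻¹) =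
          std lm tm ((0 + aa) * (lm * tm)) (-(0 * lm + aa * tm)) := by
        have h' := span_entry lm tm 0 aa
        rw [show Cc (0:ℂ) = 0 by rw [← toK_C, map_zero, map_zero], zero_mul, zero_add] at h'
        exact h'
      have hR : Xr⁻¹ - (Xr - Cc lm)⁻¹ =
          std lm tm ((1 + 0) * (lm * tm)) (-(1 * lm + 0 * tm)) := by
        have h' := span_entry lm tm 1 0
        rw [show Cc (0:ℂ) = 0 by rw [← toK_C, map_zero, map_zero], zero_mul, add_zero,
          show Cc (1:ℂ) = 1 by rw [← toK_C, map_one, map_one], one_mul] at h'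
        exact h'
      rw [hL, hR] at h10'
      obtain ⟨q0, q1⟩ := std_inj lm tm h10'
      have haa : aa = 1 := by
        have := mul_right_cancel₀ hlmtm q0
        simpa using this
      rw [haa] at q1
      simp at q1
      exact hlt q1.symm
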